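/- arXiv:2605.03674 — 2 statements merged into one kernel-verified Lean document; each statement's English description precedes it below -/
import Mathlib

section
/- The function φ(u) = 2(e^u − 1 − u)/u² (with φ(0) = 1) is increasing on ℝ. -/
noncomputable def phi (u : ℝ) : ℝ := if u = 0 then 1 else 2 * (Real.exp u - 1 - u) / u ^ 2

/-!
`φ(u) = 2 ∫₀¹ (1 - t) e^{tu} dt` for every `u` (Taylor's formula for `exp` with integral
remainder; at `u = 0` both sides are `1`), and for each `t ∈ [0, 1]` the integrand is increasing
in `u`.
-/

open Real intervalIntegral

theorem integral_one_sub_mul_exp_mul {u : ℝ} (hu : u ≠ 0) :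
    ∫ t in (0 : ℝ)..1, (1 - t) * exp (t * u) = (exp u - 1 - u) / u ^ 2 := by
  have hderiv (t : ℝ) : HasDerivAt (fun t => ((1 - t) * u + 1) * exp (t * u) / u ^ 2)
      ((1 - t) * exp (t * u)) t := by
    refine ((((hasDerivAt_id' t).const_sub 1).mul_const u |>.add_const 1).mul
      ((hasDerivAt_id' t).mul_const u).exp |>.div_const (u ^ 2)).congr_deriv ?_
    field_simp
    ring
  rw [integral_eq_sub_of_hasDerivAt (fun t _ => hderiv t)
    (Continuous.intervalIntegrable (by fun_prop) _ _)]
  field_simp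
  simp
  ring

theorem integral_one_sub : ∫ t in (0 : ℝ)..1, (1 - t) = 1 / 2 := by
  rw [integral_sub intervalIntegrable_const intervalIntegrable_id]
  norm_num

theorem phi_eq_integral (u : ℝ) : phi u = 2 * ∫ t in (0 : ℝ)..1, (1 - t) * exp (t * u) := by
  rcases eq_or_ne u 0 with rfl | hu
  · simp [phi, integral_one_sub]
  · rw [phi, if_neg hu, integral_one_sub_mul_exp_mul hu, mul_div_assoc]

theorem monotone_integral_one_sub_mul_exp_mul :
    Monotone fun u : ℝ => ∫ t in (0 : ℝ)..1, (1 - t) * exp (t * u) := by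
  intro a b hab
  refine integral_mono_on zero_le_one (Continuous.intervalIntegrable (by fun_prop) _ _)
    (Continuous.intervalIntegrable (by fun_prop) _ _) fun t ⟨ht₀, ht₁⟩ => ?_
  have : 0 ≤ 1 - t := by linarith
  gcongr

/-- The function `φ(u) = 2(e^u − 1 − u)/u²` (with `φ(0) = 1`) is increasing on `ℝ`. -/
theorem stmt1 : Monotone phi := by
  intro a b hab
  rw [phi_eq_integral, phi_eq_integral]
  gcongr
  exact monotone_integral_one_sub_mul_exp_mul hab
end

section
/- Under the same hypotheses (doubling condition π(B(θ,2u)) ≤ e^{γu}π(B(θ,u)) for all u ≥ r, with π(B(θ,u)) > 0, and γr ≥ 1), for every η > 0: ∫_Θ exp(−(2+η)γ ℓ(θ,θ')) dπ(θ') ≤ (1 − e^{−η})^{−1} π(B(θ,r)). -/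
open MeasureTheory Set

/-!
Cut `Θ` into the dyadic shells `2ᵏ r < ℓ(θ, ·) ≤ 2ᵏ⁺¹ r` around the ball `B(θ, r)`.
Iterating the doubling condition gives `π(B(θ, 2ᵏ r)) ≤ exp(γr(2ᵏ - 1)) π(B(θ, r))`, while the
integrand is at most `exp(-(2 + η)γ 2ᵏ r)` on the `k`-th shell. Since `γr ≥ 1`, the product is at
most `e^{-η(k+1)} π(B(θ, r))`, and summing the geometric series over the shells (the ball itself
contributing at most `π(B(θ, r))`) gives the bound.
-/

section

open Real

theorem le_exp_mul_of_doubling {m : ℝ → ℝ} {γ r : ℝ} (hr : 0 ≤ r)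
    (hdouble : ∀ u ≥ r, m (2 * u) ≤ exp (γ * u) * m u) (k : ℕ) :
    m (2 ^ k * r) ≤ exp (γ * r * (2 ^ k - 1)) * m r := by
  induction k with
  | zero => simp
  | succ k ih =>
    have hkr : r ≤ 2 ^ k * r := le_mul_of_one_le_left hr (one_le_pow₀ one_le_two)
    calc m (2 ^ (k + 1) * r) = m (2 * (2 ^ k * r)) := by ring_nf
      _ ≤ exp (γ * (2 ^ k * r)) * m (2 ^ k * r) := hdouble _ hkr
      _ ≤ exp (γ * (2 ^ k * r)) * (exp (γ * r * (2 ^ k - 1)) * m r) := by gcongr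
      _ = exp (γ * r * (2 ^ (k + 1) - 1)) * m r := by
        rw [← mul_assoc, ← exp_add]
        ring_nf

theorem exp_decay_mul_exp_growth_le_pow {γ r η : ℝ} (hγr : 1 ≤ γ * r) (hη : 0 ≤ η) (k : ℕ) :
    exp (-((2 + η) * γ * (2 ^ k * r))) * exp (γ * r * (2 ^ (k + 1) - 1)) ≤
      exp (-η) ^ (k + 1) := by
  rw [← exp_add, ← exp_nat_mul, exp_le_exp]
  have hk : (k : ℝ) + 1 ≤ 2 ^ k := by exact_mod_cast Nat.lt_two_pow_self
  have hX : 0 ≤ η * 2 ^ k := by positivity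
  push_cast
  rw [pow_succ]
  nlinarith [mul_le_mul_of_nonneg_left hk hη, mul_nonneg (sub_nonneg.2 hγr) hX]

theorem iUnion_setOf_le_two_pow_mul {Θ : Type*} {d : Θ → ℝ} {r : ℝ} (hr : 0 < r) :
    ⋃ k : ℕ, {x | d x ≤ 2 ^ k * r} = univ := by
  refine eq_univ_of_forall fun x => mem_iUnion.2 ?_
  obtain ⟨k, hk⟩ := pow_unbounded_of_one_lt (d x / r) one_lt_two
  exact ⟨k, (div_le_iff₀ hr).1 hk.le⟩

theorem monotone_setOf_le_two_pow_mul {Θ : Type*} {d : Θ → ℝ} {r : ℝ} (hr : 0 ≤ r) :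
    Monotone fun k : ℕ => {x | d x ≤ 2 ^ k * r} := fun _ _ hij _ hx =>
  le_trans hx (mul_le_mul_of_nonneg_right (pow_le_pow_right₀ one_le_two hij) hr)

section

variable {Θ : Type*} [MeasurableSpace Θ] {μ : Measure Θ}

theorem integral_le_of_setIntegral_disjointed_le {f : Θ → ℝ} (hf : Integrable f μ)
    {s : ℕ → Set Θ} (hs : ∀ k, MeasurableSet (s k)) (hcover : ⋃ k, s k = univ)
    {a : ℕ → ℝ} {A : ℝ} (ha : HasSum a A) (hle : ∀ k, ∫ x in disjointed s k, f x ∂μ ≤ a k) :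
    ∫ x, f x ∂μ ≤ A := by
  have hsum := hasSum_integral_iUnion (MeasurableSet.disjointed hs) (disjoint_disjointed s)
    (by rw [iUnion_disjointed, hcover]; exact hf.integrableOn)
  rw [iUnion_disjointed, hcover, Measure.restrict_univ] at hsum
  exact hasSum_le hle hsum ha

theorem setIntegral_le_of_le_const [IsFiniteMeasure μ] {f : Θ → ℝ} {s : Set Θ} {C : ℝ}
    (hs : MeasurableSet s) (hf : IntegrableOn f s μ) (hC : ∀ x ∈ s, f x ≤ C) :
    ∫ x in s, f x ∂μ ≤ C * μ.real s := by
  rw [mul_comm, ← smul_eq_mul, ← setIntegral_const]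
  exact setIntegral_mono_on hf (integrableOn_const (measure_ne_top _ _)) hs hC

variable [IsFiniteMeasure μ] {d : Θ → ℝ}

theorem integrable_exp_neg_mul (hd : Measurable d) (hd0 : ∀ x, 0 ≤ d x) {c : ℝ} (hc : 0 ≤ c) :
    Integrable (fun x => exp (-(c * d x))) μ := by
  refine .of_bound (hd.const_mul c).neg.exp.aestronglyMeasurable 1 (.of_forall fun x => ?_)
  rw [norm_of_nonneg (exp_nonneg _), exp_le_one_iff, neg_nonpos]
  exact mul_nonneg hc (hd0 x)

theorem setIntegral_exp_neg_mul_le_measureReal (hd : Measurable d) (hd0 : ∀ x, 0 ≤ d x)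
    {c : ℝ} (hc : 0 ≤ c) {s : Set Θ} (hs : MeasurableSet s) :
    ∫ x in s, exp (-(c * d x)) ∂μ ≤ μ.real s := by
  refine (setIntegral_le_of_le_const hs (integrable_exp_neg_mul hd hd0 hc).integrableOn
    fun x _ => ?_).trans_eq (one_mul _)
  rw [exp_le_one_iff, neg_nonpos]
  exact mul_nonneg hc (hd0 x)

theorem setIntegral_exp_shell_le (hd : Measurable d) (hd0 : ∀ x, 0 ≤ d x) {γ r η : ℝ}
    (hr : 0 ≤ r) (hγr : 1 ≤ γ * r) (hη : 0 ≤ η)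
    (hdouble : ∀ u ≥ r, μ.real {x | d x ≤ 2 * u} ≤ exp (γ * u) * μ.real {x | d x ≤ u}) (k : ℕ) :
    ∫ x in {x | d x ≤ 2 ^ (k + 1) * r} \ {x | d x ≤ 2 ^ k * r}, exp (-((2 + η) * γ * d x)) ∂μ ≤
      exp (-η) ^ (k + 1) * μ.real {x | d x ≤ r} := by
  have hc : 0 ≤ (2 + η) * γ := mul_nonneg (by linarith) (by nlinarith)
  have hshell : MeasurableSet ({x | d x ≤ 2 ^ (k + 1) * r} \ {x | d x ≤ 2 ^ k * r}) :=
    (hd measurableSet_Iic).diff (hd measurableSet_Iic)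
  calc _ ≤ exp (-((2 + η) * γ * (2 ^ k * r))) * μ.real {x | d x ≤ 2 ^ (k + 1) * r} := by
        refine (setIntegral_le_of_le_const hshell (integrable_exp_neg_mul hd hd0 hc).integrableOn
          fun x hx => ?_).trans
          (mul_le_mul_of_nonneg_left (measureReal_mono sdiff_subset) (exp_nonneg _))
        gcongr
        exact (not_le.1 hx.2).le
    _ ≤ exp (-((2 + η) * γ * (2 ^ k * r))) *
        (exp (γ * r * (2 ^ (k + 1) - 1)) * μ.real {x | d x ≤ r}) := by
        gcongr
        exact le_exp_mul_of_doubling (m := fun u => μ.real {x | d x ≤ u}) hr hdouble (k + 1)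
    _ ≤ exp (-η) ^ (k + 1) * μ.real {x | d x ≤ r} := by
        rw [← mul_assoc]
        gcongr
        exact exp_decay_mul_exp_growth_le_pow hγr hη k

end

end

theorem stmt5_general {Θ : Type*} [MeasurableSpace Θ] (π : Measure Θ) [IsProbabilityMeasure π]
    (ℓ : Θ → Θ → ℝ) (hℓ : ∀ θ θ', 0 ≤ ℓ θ θ') (θ : Θ)
    (hmeas : Measurable (fun θ' => ℓ θ θ'))
    (γ r : ℝ) (hγ : 0 < γ) (hr : 0 < r) (hγr : 1 ≤ γ * r)
    (hdouble : ∀ u ≥ r,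
      (π {θ' | ℓ θ θ' ≤ 2 * u}).toReal ≤ Real.exp (γ * u) * (π {θ' | ℓ θ θ' ≤ u}).toReal)
    (η : ℝ) (hη : 0 < η) :
    ∫ θ', Real.exp (-((2 + η) * γ * ℓ θ θ')) ∂π ≤
      (1 - Real.exp (-η))⁻¹ * (π {θ' | ℓ θ θ' ≤ r}).toReal := by
  have hc : 0 ≤ (2 + η) * γ := by positivity
  have hgeom :=
    hasSum_geometric_of_lt_one (Real.exp_nonneg (-η)) (Real.exp_lt_one_iff.2 (neg_neg_of_pos hη))
  have hmono := monotone_setOf_le_two_pow_mul (d := ℓ θ) hr.le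
  refine integral_le_of_setIntegral_disjointed_le (s := fun k : ℕ => {x | ℓ θ x ≤ 2 ^ k * r})
    (integrable_exp_neg_mul hmeas (hℓ θ) hc)
    (fun k => hmeas measurableSet_Iic) (iUnion_setOf_le_two_pow_mul hr)
    (hgeom.mul_right _) ?_
  rintro (_ | k)
  · simp only [disjointed_zero, pow_zero, one_mul]
    exact setIntegral_exp_neg_mul_le_measureReal hmeas (hℓ θ) hc (hmeas measurableSet_Iic)
  · rw [hmono.disjointed_add_one]
    exact setIntegral_exp_shell_le hmeas (hℓ θ) hr.le hγr hη.le hdouble k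

/-- Under the doubling condition at scale `r` and above, with `γr ≥ 1`, for every `η > 0`:
`∫_Θ exp(−(2+η)γ ℓ(θ,θ')) dπ(θ') ≤ (1 − e^{−η})⁻¹ π(B(θ,r))`. -/
theorem stmt5 {Θ : Type*} [MeasurableSpace Θ] (π : Measure Θ) [IsProbabilityMeasure π]
    (ℓ : Θ → Θ → ℝ) (hℓ : ∀ θ θ', 0 ≤ ℓ θ θ') (θ : Θ)
    (hmeas : Measurable (fun θ' => ℓ θ θ'))
    (γ r : ℝ) (hγ : 0 < γ) (hr : 0 < r) (hγr : 1 ≤ γ * r)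
    (hpos : ∀ u ≥ r, 0 < (π {θ' | ℓ θ θ' ≤ u}).toReal)
    (hdouble : ∀ u ≥ r,
      (π {θ' | ℓ θ θ' ≤ 2 * u}).toReal ≤ Real.exp (γ * u) * (π {θ' | ℓ θ θ' ≤ u}).toReal)
    (η : ℝ) (hη : 0 < η) :
    ∫ θ', Real.exp (-((2 + η) * γ * ℓ θ θ')) ∂π ≤
      (1 - Real.exp (-η))⁻¹ * (π {θ' | ℓ θ θ' ≤ r}).toReal :=
  stmt5_general π ℓ hℓ θ hmeas γ r hγ hr hγr hdouble η hη
end
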